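/- arXiv:2204.02366 — 2 statements merged into one kernel-verified Lean document; each statement's English description precedes it below -/
import Mathlib

section
/- (Sublinear convergence of Frank-Wolfe.) With stepsizes ω_k = 2/(k+2), the Frank-Wolfe iterates for the relaxed problem satisfy γ_k = 𝒥(μ^k) − 𝒥* ≤ 2C_1/k for all k ≥ 1, where C_1 = (1/N)∑_j L̃_j ∑_i d_{ij}². -/
open Finset
open scoped RealInnerProductSpace Pointwise NNReal

/-!
Each `f_j` is `L̃_j`-smooth on the convex hull `K_j` of its attainable aggregates, so the descent
lemma bounds one Frank-Wolfe step: the aggregate `y_j` moves by `ω_k (ȳ_j - y_j)`, a vector of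
length at most `ω_k (1/N) ∑_i d_ij`, whence
`𝒥(μ^{k+1}) ≤ 𝒥(μ^k) + ω_k ∑_j ⟪∇f_j(y_j), ȳ_j - y_j⟫ + ω_k² C₁/2`
(using `(mean_i d_ij)² ≤ mean_i d_ij²`). Convexity of the `f_j` and the minimality of the Dirac
vertex `μ̄^k` for the linearised objective bound the linear term by `𝒥* - 𝒥(μ^k)`. Hence
`γ_{k+1} ≤ (1 - ω_k) γ_k + ω_k² C₁/2`, and for `ω_k = 2/(k+2)` induction gives `γ_k ≤ 2C₁/k`.
-/

/-- A finitely supported probability measure, encoded as a `Finsupp` of weights. -/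
def IsFinProb {Ω : Type*} (μ : Ω →₀ ℝ) : Prop :=
  (∀ x, 0 ≤ μ x) ∧ μ.sum (fun _ w => w) = 1

/-- Expectation of `F` under a finitely supported measure `μ`. -/
noncomputable def expFS {Ω E : Type*} [AddCommMonoid E] [Module ℝ E]
    (μ : Ω →₀ ℝ) (F : Ω → E) : E :=
  μ.sum fun x w => w • F x

section FiniteExpectation

variable {Ω : Type*}

theorem expFS_smul_add_smul {V : Type*} [AddCommGroup V] [Module ℝ V] (a b : ℝ)
    (μ ν : Ω →₀ ℝ) (F : Ω → V) : expFS (a • μ + b • ν) F = a • expFS μ F + b • expFS ν F := by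
  simp [expFS, ← Finsupp.linearCombination_apply]

theorem expFS_single {V : Type*} [AddCommGroup V] [Module ℝ V] (x : Ω) (F : Ω → V) :
    expFS (Finsupp.single x 1) F = F x := by
  simp [expFS]

theorem inner_expFS {V : Type*} [NormedAddCommGroup V] [InnerProductSpace ℝ V] (c : V)
    (μ : Ω →₀ ℝ) (F : Ω → V) : ⟪c, expFS μ F⟫ = expFS μ fun x => ⟪c, F x⟫ := by
  simp [expFS, Finsupp.sum, inner_sum, inner_smul_right]

theorem expFS_sum {κ V : Type*} [AddCommMonoid V] [Module ℝ V] (t : Finset κ) (μ : Ω →₀ ℝ)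
    (F : κ → Ω → V) : expFS μ (fun x => ∑ j ∈ t, F j x) = ∑ j ∈ t, expFS μ (F j) := by
  simp only [expFS, Finsupp.sum, smul_sum]
  exact sum_comm

theorem isFinProb_single (x : Ω) : IsFinProb (Finsupp.single x 1) := by
  classical
  refine ⟨fun y => ?_, by simp⟩
  rw [Finsupp.single_apply]
  split_ifs <;> norm_num

theorem IsFinProb.smul_add_smul {μ ν : Ω →₀ ℝ} (hμ : IsFinProb μ) (hν : IsFinProb ν) {a b : ℝ}
    (ha : 0 ≤ a) (hb : 0 ≤ b) (hab : a + b = 1) : IsFinProb (a • μ + b • ν) := by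
  refine ⟨fun x => ?_, ?_⟩
  · have := hμ.1 x
    have := hν.1 x
    simp only [Finsupp.add_apply, Finsupp.smul_apply, smul_eq_mul]
    positivity
  · have h := expFS_smul_add_smul a b μ ν fun _ => (1 : ℝ)
    simp only [expFS, smul_eq_mul, mul_one] at h
    rw [h, hμ.2, hν.2]
    simpa using hab

theorem IsFinProb.expFS_mem_convexHull {V : Type*} [AddCommGroup V] [Module ℝ V]
    {μ : Ω →₀ ℝ} (hμ : IsFinProb μ) (F : Ω → V) :
    expFS μ F ∈ convexHull ℝ (Set.range F) := by
  have hsum : ∑ x ∈ μ.support, μ x = 1 := hμ.2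
  have hcenter : expFS μ F = μ.support.centerMass μ F := by
    rw [centerMass_eq_of_sum_1 _ _ hsum]
    rfl
  rw [hcenter]
  exact centerMass_mem_convexHull _ (fun x _ => hμ.1 x) (by rw [hsum]; norm_num)
    fun x _ => Set.mem_range_self x

theorem IsFinProb.le_expFS {μ : Ω →₀ ℝ} (hμ : IsFinProb μ) {h : Ω → ℝ} {c : ℝ}
    (hc : ∀ x, c ≤ h x) : c ≤ expFS μ h := by
  have hsum : ∑ x ∈ μ.support, μ x = 1 := hμ.2
  calc c = ∑ x ∈ μ.support, μ x * c := by rw [← sum_mul, hsum, one_mul]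
    _ ≤ ∑ x ∈ μ.support, μ x * h x := sum_le_sum fun x _ => by gcongr; exacts [hμ.1 x, hc x]
    _ = expFS μ h := rfl

theorem isFinProb_of_frankWolfe_update {μ : ℕ → Ω →₀ ℝ} {ω : ℕ → ℝ} {xbar : ℕ → Ω}
    (h0 : IsFinProb (μ 0)) (hω₀ : ∀ k, 0 ≤ ω k) (hω₁ : ∀ k, ω k ≤ 1)
    (hupdate : ∀ k, μ (k + 1) = (1 - ω k) • μ k + ω k • Finsupp.single (xbar k) 1) :
    ∀ k, IsFinProb (μ k)
  | 0 => h0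
  | k + 1 => hupdate k ▸ (isFinProb_of_frankWolfe_update h0 hω₀ hω₁ hupdate k).smul_add_smul
      (isFinProb_single _) (sub_nonneg.2 (hω₁ k)) (hω₀ k) (sub_add_cancel 1 (ω k))

end FiniteExpectation

theorem Set.range_sum_pi {ι : Type*} [Fintype ι] {α : ι → Type*} {V : Type*} [AddCommMonoid V]
    (G : ∀ i, α i → V) :
    Set.range (fun x : ∀ i, α i => ∑ i, G i (x i)) = ∑ i, Set.range (G i) := by
  ext v
  rw [Set.mem_fintype_sum]
  constructor
  · rintro ⟨x, rfl⟩
    exact ⟨fun i => G i (x i), fun i => ⟨x i, rfl⟩, rfl⟩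
  · rintro ⟨w, hw, rfl⟩
    choose x hx using hw
    exact ⟨x, by simp only [hx]⟩

theorem norm_sub_le_of_mem_convexHull {V : Type*} [NormedAddCommGroup V] [NormedSpace ℝ V]
    {s : Set V} {D : ℝ} (hs : ∀ a ∈ s, ∀ b ∈ s, ‖a - b‖ ≤ D) {u v : V}
    (hu : u ∈ convexHull ℝ s) (hv : v ∈ convexHull ℝ s) : ‖u - v‖ ≤ D := by
  obtain ⟨a, ha, b, hb, hab⟩ := convexHull_exists_dist_ge2 hu hv
  rw [dist_eq_norm, dist_eq_norm] at hab
  exact hab.trans (hs a ha b hb)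

section Calculus

open AffineMap

variable {F : Type*} [NormedAddCommGroup F] [InnerProductSpace ℝ F] [CompleteSpace F]

theorem HasGradientAt.hasDerivAt_comp_lineMap {f : F → ℝ} {G y z : F} {t : ℝ}
    (hG : HasGradientAt f G (lineMap y z t)) :
    HasDerivAt (fun t => f (lineMap y z t)) ⟪G, z - y⟫ t := by
  have h := hG.hasFDerivAt.comp_hasDerivAt t (hasDerivAt_lineMap (a := y) (b := z))
  rwa [InnerProductSpace.toDual_apply_apply] at h

theorem ConvexOn.add_inner_le_of_hasGradientAt {f : F → ℝ} {s : Set F} (hf : ConvexOn ℝ s f)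
    {y w G : F} (hy : y ∈ s) (hw : w ∈ s) (hG : HasGradientAt f G y) :
    f y + ⟪G, w - y⟫ ≤ f w := by
  have hφ : ConvexOn ℝ (lineMap y w ⁻¹' s) (f ∘ lineMap y w) := hf.comp_affineMap _
  have hslope := hφ.le_slope_of_hasDerivAt (x := 0) (y := 1) (by simpa) (by simpa) zero_lt_one
    (HasGradientAt.hasDerivAt_comp_lineMap (by simpa using hG))
  simp only [slope, sub_zero, inv_one, Function.comp_apply, lineMap_apply_one,
    lineMap_apply_zero, vsub_eq_sub, smul_eq_mul, one_mul] at hslope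
  linarith

theorem le_add_deriv_add_of_deriv_sub_le {φ φ' : ℝ → ℝ} {c : ℝ}
    (hφ : ∀ t ∈ Set.Icc (0 : ℝ) 1, HasDerivAt φ (φ' t) t)
    (hφ' : ∀ t ∈ Set.Icc (0 : ℝ) 1, φ' t - φ' 0 ≤ c * t) :
    φ 1 ≤ φ 0 + φ' 0 + c / 2 := by
  have hB (t : ℝ) : HasDerivAt (fun t => φ 0 + φ' 0 * t + c / 2 * t ^ 2) (φ' 0 + c * t) t :=
    (((hasDerivAt_id t).const_mul _).const_add _ |>.add
      ((hasDerivAt_pow 2 t).const_mul (c / 2))).congr_deriv (by simp; ring)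
  have key := image_le_of_deriv_right_le_deriv_boundary (a := 0) (b := 1)
    (fun t ht => (hφ t ht).continuousAt.continuousWithinAt)
    (fun t ht => (hφ t (Set.Ico_subset_Icc_self ht)).hasDerivWithinAt) (by simp) (by fun_prop)
    (fun t _ => (hB t).hasDerivWithinAt)
    (fun t ht => by linarith [hφ' t (Set.Ico_subset_Icc_self ht)]) (Set.right_mem_Icc.2 zero_le_one)
  simpa using key

theorem descent_lemma {f : F → ℝ} {Df : F → F} {s : Set F} {L : ℝ≥0} (hs : Convex ℝ s)
    (hf : ∀ u ∈ s, HasGradientAt f (Df u) u) (hDf : LipschitzOnWith L Df s)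
    {y z : F} (hy : y ∈ s) (hz : z ∈ s) :
    f z ≤ f y + ⟪Df y, z - y⟫ + L / 2 * ‖z - y‖ ^ 2 := by
  have hseg (t : ℝ) (ht : t ∈ Set.Icc 0 1) : lineMap y z t ∈ s := hs.lineMap_mem hy hz ht
  have hgrad (t : ℝ) (ht : t ∈ Set.Icc 0 1) :
      ⟪Df (lineMap y z t), z - y⟫ - ⟪Df (lineMap y z (0 : ℝ)), z - y⟫ ≤ L * ‖z - y‖ ^ 2 * t :=
    calc _ = ⟪Df (lineMap y z t) - Df y, z - y⟫ := by rw [inner_sub_left, lineMap_apply_zero]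
      _ ≤ ‖Df (lineMap y z t) - Df y‖ * ‖z - y‖ := real_inner_le_norm _ _
      _ ≤ L * (t * ‖z - y‖) * ‖z - y‖ := by
        gcongr
        rw [← dist_eq_norm]
        refine (hDf.dist_le_mul _ (hseg t ht) _ hy).trans_eq ?_
        rw [dist_lineMap_left, Real.norm_of_nonneg ht.1, dist_eq_norm']
      _ = L * ‖z - y‖ ^ 2 * t := by ring
  have key := le_add_deriv_add_of_deriv_sub_le (φ := fun t => f (lineMap y z t))
    (fun t ht => (hf _ (hseg t ht)).hasDerivAt_comp_lineMap) hgrad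
  simp only [lineMap_apply_zero, lineMap_apply_one] at key
  linarith

end Calculus

theorem le_two_mul_div_of_frankWolfe_recursion {γ : ℕ → ℝ} {C : ℝ} (hC : 0 ≤ C)
    (h : ∀ k : ℕ, γ (k + 1) ≤ (1 - 2 / (k + 2)) * γ k + (2 / (k + 2)) ^ 2 * (C / 2)) :
    ∀ k : ℕ, 1 ≤ k → γ k ≤ 2 * C / k := by
  refine Nat.le_induction ?_ fun k hk ih => ?_
  · have h0 := h 0
    norm_num at h0 ⊢
    linarith
  have hk' : (1 : ℝ) ≤ k := by exact_mod_cast hk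
  have hω : 0 ≤ 1 - 2 / ((k : ℝ) + 2) := by
    rw [sub_nonneg, div_le_one (by positivity)]
    linarith
  -- `(k+1)(k+3) ≤ (k+2)²` closes the induction
  calc γ (k + 1) ≤ (1 - 2 / (k + 2)) * (2 * C / k) + (2 / (k + 2)) ^ 2 * (C / 2) := by
        grw [h k, ih]
    _ = 2 * C * (k + 3) / (k + 2) ^ 2 := by field_simp; ring
    _ ≤ 2 * C / ↑(k + 1) := by
        rw [div_le_div_iff₀ (by positivity) (by positivity)]
        push_cast
        nlinarith

theorem frankWolfe_step_le {ι : Type*} [Fintype ι] {E : ι → Type*}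
    [∀ j, NormedAddCommGroup (E j)] [∀ j, InnerProductSpace ℝ (E j)] [∀ j, CompleteSpace (E j)]
    {f : ∀ j, E j → ℝ} {Df : ∀ j, E j → E j} {L : ι → ℝ≥0} {K : ∀ j, Set (E j)}
    (hK : ∀ j, Convex ℝ (K j)) (hf : ∀ j, ∀ u ∈ K j, HasGradientAt (f j) (Df j u) u)
    (hDf : ∀ j, LipschitzOnWith (L j) (Df j) (K j))
    {y s : ∀ j, E j} (hy : ∀ j, y j ∈ K j) (hs : ∀ j, s j ∈ K j)
    {D : ι → ℝ} (hD : ∀ j, ‖s j - y j‖ ≤ D j) {ω : ℝ} (hω₀ : 0 ≤ ω) (hω₁ : ω ≤ 1) {m : ℝ}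
    (hgap : ∑ j, f j (y j) + ∑ j, ⟪Df j (y j), s j - y j⟫ ≤ m) :
    ∑ j, f j (y j + ω • (s j - y j)) - m ≤
      (1 - ω) * (∑ j, f j (y j) - m) + ω ^ 2 * ∑ j, L j / 2 * D j ^ 2 := by
  have hstep : ∀ j, f j (y j + ω • (s j - y j)) ≤
      f j (y j) + ω * ⟪Df j (y j), s j - y j⟫ + ω ^ 2 * (L j / 2 * D j ^ 2) := by
    intro j
    have hz : y j + ω • (s j - y j) ∈ K j := (hK j).add_smul_sub_mem (hy j) (hs j) ⟨hω₀, hω₁⟩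
    have hquad : (L j : ℝ) / 2 * ‖ω • (s j - y j)‖ ^ 2 ≤ ω ^ 2 * (L j / 2 * D j ^ 2) := by
      rw [norm_smul, mul_pow, Real.norm_eq_abs, sq_abs, mul_left_comm]
      gcongr
      exact hD j
    have := descent_lemma (hK j) (hf j) (hDf j) (hy j) hz
    rw [add_sub_cancel_left, inner_smul_right] at this
    linarith
  calc ∑ j, f j (y j + ω • (s j - y j)) - m
      ≤ ∑ j, f j (y j) + ω * ∑ j, ⟪Df j (y j), s j - y j⟫
          + ω ^ 2 * ∑ j, L j / 2 * D j ^ 2 - m := by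
        grw [sum_le_sum fun j _ => hstep j]
        simp only [sum_add_distrib, mul_sum]
        rfl
    _ ≤ (1 - ω) * (∑ j, f j (y j) - m) + ω ^ 2 * ∑ j, L j / 2 * D j ^ 2 := by
        nlinarith

section Aggregate

variable {N : ℕ} {X : Fin N → Type*}

/-- `aggregate (g · j) ν` is the paper's `(1/N) ∑ᵢ E_{νᵢ}[g_{ij}]`, the `j`-th component of the
aggregate `y`. -/
noncomputable def aggregate {V : Type*} [AddCommGroup V] [Module ℝ V] (G : ∀ i, X i → V)
    (ν : ∀ i, X i →₀ ℝ) : V :=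
  (N : ℝ)⁻¹ • ∑ i, expFS (ν i) (G i)

theorem norm_sub_le_of_mem_convexHull_range {V : Type*} [NormedAddCommGroup V] [NormedSpace ℝ V]
    {G : ∀ i, X i → V} {d : Fin N → ℝ} (hd : ∀ i (a b : X i), ‖G i a - G i b‖ ≤ d i) {u v : V}
    (hu : u ∈ convexHull ℝ (Set.range fun x : ∀ i, X i => (N : ℝ)⁻¹ • ∑ i, G i (x i)))
    (hv : v ∈ convexHull ℝ (Set.range fun x : ∀ i, X i => (N : ℝ)⁻¹ • ∑ i, G i (x i))) :
    ‖u - v‖ ≤ (N : ℝ)⁻¹ * ∑ i, d i := by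
  refine norm_sub_le_of_mem_convexHull ?_ hu hv
  rintro _ ⟨x, rfl⟩ _ ⟨x', rfl⟩
  rw [← smul_sub, ← sum_sub_distrib, norm_smul, norm_inv, Real.norm_natCast]
  gcongr
  exact (norm_sum_le _ _).trans (sum_le_sum fun i _ => hd i _ _)

variable {V : Type*} [AddCommGroup V] [Module ℝ V]

theorem aggregate_mem_convexHull (G : ∀ i, X i → V) {ν : ∀ i, X i →₀ ℝ}
    (hν : ∀ i, IsFinProb (ν i)) :
    aggregate G ν ∈ convexHull ℝ (Set.range fun x : ∀ i, X i => (N : ℝ)⁻¹ • ∑ i, G i (x i)) := by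
  rw [Set.range_smul, convexHull_smul, Set.range_sum_pi, convexHull_sum]
  exact Set.smul_mem_smul_set <|
    Set.finsetSum_mem_finsetSum _ _ _ fun i _ => (hν i).expFS_mem_convexHull (G i)

theorem aggregate_single (G : ∀ i, X i → V) (x : ∀ i, X i) :
    aggregate G (fun i => Finsupp.single (x i) 1) = (N : ℝ)⁻¹ • ∑ i, G i (x i) := by
  simp only [aggregate, expFS_single]

theorem aggregate_frankWolfe_update (G : ∀ i, X i → V) (μ : ∀ i, X i →₀ ℝ) (x : ∀ i, X i) (ω : ℝ) :
    aggregate G (fun i => (1 - ω) • μ i + ω • Finsupp.single (x i) 1) =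
      aggregate G μ + ω • ((N : ℝ)⁻¹ • ∑ i, G i (x i) - aggregate G μ) := by
  simp only [aggregate, expFS_smul_add_smul, expFS_single, sum_add_distrib, ← smul_sum]
  module

variable {κ : Type*} [Fintype κ] {E : κ → Type*} [∀ j, NormedAddCommGroup (E j)]
  [∀ j, InnerProductSpace ℝ (E j)]

theorem sum_inner_aggregate (c : ∀ j, E j) (g : ∀ i j, X i → E j) (ν : ∀ i, X i →₀ ℝ) :
    ∑ j, ⟪c j, aggregate (g · j) ν⟫ =
      (N : ℝ)⁻¹ * ∑ i, expFS (ν i) fun x => ∑ j, ⟪c j, g i j x⟫ := by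
  simp only [aggregate, inner_smul_right, inner_sum, inner_expFS, expFS_sum, ← mul_sum]
  rw [sum_comm]

theorem sum_inner_aggregate_single_le (c : ∀ j, E j) (g : ∀ i j, X i → E j) {xbar : ∀ i, X i}
    (hxbar : ∀ i (b : X i), ∑ j, ⟪c j, g i j (xbar i)⟫ ≤ ∑ j, ⟪c j, g i j b⟫)
    {ν : ∀ i, X i →₀ ℝ} (hν : ∀ i, IsFinProb (ν i)) :
    ∑ j, ⟪c j, (N : ℝ)⁻¹ • ∑ i, g i j (xbar i)⟫ ≤ ∑ j, ⟪c j, aggregate (g · j) ν⟫ := by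
  have hvertex := sum_inner_aggregate c g fun i => Finsupp.single (xbar i) 1
  simp only [aggregate_single, expFS_single] at hvertex
  rw [hvertex, sum_inner_aggregate]
  gcongr with i
  exact (hν i).le_expFS (hxbar i)

variable [∀ j, CompleteSpace (E j)]

theorem frankWolfe_gap_le {f : ∀ j, E j → ℝ} {Df : ∀ j, E j → E j} {K : ∀ j, Set (E j)}
    (hconv : ∀ j, ConvexOn ℝ (K j) (f j)) (hdiff : ∀ j, ∀ y ∈ K j, HasGradientAt (f j) (Df j y) y)
    (g : ∀ i j, X i → E j) {y : ∀ j, E j} (hy : ∀ j, y j ∈ K j) {xbar : ∀ i, X i}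
    (hxbar : ∀ i (b : X i), ∑ j, ⟪Df j (y j), g i j (xbar i)⟫ ≤ ∑ j, ⟪Df j (y j), g i j b⟫)
    {ν : ∀ i, X i →₀ ℝ} (hν : ∀ i, IsFinProb (ν i)) (hνK : ∀ j, aggregate (g · j) ν ∈ K j) :
    ∑ j, f j (y j) + ∑ j, ⟪Df j (y j), (N : ℝ)⁻¹ • ∑ i, g i j (xbar i) - y j⟫ ≤
      ∑ j, f j (aggregate (g · j) ν) := by
  have hlin := sum_inner_aggregate_single_le (fun j => Df j (y j)) g hxbar hν
  calc _ ≤ ∑ j, f j (y j) + ∑ j, ⟪Df j (y j), aggregate (g · j) ν - y j⟫ := by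
        simp only [inner_sub_right, sum_sub_distrib]
        linarith
    _ = ∑ j, (f j (y j) + ⟪Df j (y j), aggregate (g · j) ν - y j⟫) := sum_add_distrib.symm
    _ ≤ _ := sum_le_sum fun j _ =>
        (hconv j).add_inner_le_of_hasGradientAt (hy j) (hνK j) (hdiff j _ (hy j))

theorem sum_mul_sq_mean_le (L : κ → ℝ≥0) (d : Fin N → κ → ℝ) :
    ∑ j, (L j : ℝ) / 2 * ((N : ℝ)⁻¹ * ∑ i, d i j) ^ 2 ≤
      ((N : ℝ)⁻¹ * ∑ j, (L j : ℝ) * ∑ i, d i j ^ 2) / 2 := by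
  have hmean (j : κ) : ((N : ℝ)⁻¹ * ∑ i, d i j) ^ 2 ≤ (N : ℝ)⁻¹ * ∑ i, d i j ^ 2 := by
    simpa [inv_mul_eq_div] using sum_div_card_sq_le_sum_sq_div_card (s := univ) (f := (d · j))
  calc _ ≤ ∑ j, (L j : ℝ) / 2 * ((N : ℝ)⁻¹ * ∑ i, d i j ^ 2) := by
        gcongr with j
        exact hmean j
    _ = _ := by
        rw [mul_sum, sum_div]
        exact sum_congr rfl fun j _ => by ring

end Aggregate

/-- sublinear convergence of the Frank-Wolfe algorithm with
stepsizes `ω_k = 2/(k+2)`: `𝒥(μ^k) - 𝒥* ≤ 2 C₁ / k` for all `k ≥ 1`. -/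
theorem frank_wolfe_convergence
    {N M : ℕ}
    {X : Fin N → Type*}
    {E : Fin M → Type*}
    [∀ j, NormedAddCommGroup (E j)] [∀ j, InnerProductSpace ℝ (E j)]
    [∀ j, CompleteSpace (E j)]
    (g : ∀ (i : Fin N) (j : Fin M), X i → E j)
    (f : ∀ j, E j → ℝ) (Df : ∀ j, E j → E j)
    (Lt : Fin M → NNReal) (d : Fin N → Fin M → ℝ)
    (hconv : ∀ j, ConvexOn ℝ (convexHull ℝ
      (Set.range fun x : (∀ i, X i) => (N : ℝ)⁻¹ • ∑ i, g i j (x i))) (f j))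
    (hdiff : ∀ j, ∀ y ∈ convexHull ℝ
      (Set.range fun x : (∀ i, X i) => (N : ℝ)⁻¹ • ∑ i, g i j (x i)),
      HasGradientAt (f j) (Df j y) y)
    (hgradLip : ∀ j, LipschitzOnWith (Lt j) (Df j)
      (convexHull ℝ (Set.range fun x : (∀ i, X i) => (N : ℝ)⁻¹ • ∑ i, g i j (x i))))
    (hd : ∀ i j (a b : X i), ‖g i j a - g i j b‖ ≤ d i j)
    -- the Frank-Wolfe iterates
    (μ : ℕ → ∀ i, X i →₀ ℝ) (hμ0 : ∀ i, IsFinProb (μ 0 i))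
    (xbar : ℕ → ∀ i, X i)
    (hxbar : ∀ k i (b : X i),
      (∑ j, ⟪Df j ((N : ℝ)⁻¹ • ∑ i', expFS (μ k i') (g i' j)), g i j (xbar k i)⟫) ≤
        ∑ j, ⟪Df j ((N : ℝ)⁻¹ • ∑ i', expFS (μ k i') (g i' j)), g i j b⟫)
    (hupdate : ∀ k i, μ (k + 1) i =
      (1 - 2 / ((k : ℝ) + 2)) • μ k i +
        (2 / ((k : ℝ) + 2)) • Finsupp.single (xbar k i) (1 : ℝ))
    (B : Set ℝ)
    (hB : B = {r | ∃ ν : ∀ i, X i →₀ ℝ, (∀ i, IsFinProb (ν i)) ∧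
        r = ∑ j, f j ((N : ℝ)⁻¹ • ∑ i, expFS (ν i) (g i j))}) :
    ∀ k : ℕ, 1 ≤ k →
      (∑ j, f j ((N : ℝ)⁻¹ • ∑ i, expFS (μ k i) (g i j))) - sInf B ≤
        2 * ((N : ℝ)⁻¹ * ∑ j, (Lt j : ℝ) * ∑ i, d i j ^ 2) / k := by
  have hω₀ (k : ℕ) : 0 ≤ 2 / ((k : ℝ) + 2) := by positivity
  have hω₁ (k : ℕ) : 2 / ((k : ℝ) + 2) ≤ 1 := by
    rw [div_le_one (by positivity)]
    linarith [k.cast_nonneg (α := ℝ)]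
  have hprob (k : ℕ) (i : Fin N) : IsFinProb (μ k i) :=
    isFinProb_of_frankWolfe_update (μ := (μ · i)) (hμ0 i) hω₀ hω₁ (fun k => hupdate k i) k
  have hmem (k : ℕ) (j : Fin M) := aggregate_mem_convexHull (g · j) (hprob k)
  have hgap (k : ℕ) : ∑ j, f j (aggregate (g · j) (μ k)) + ∑ j, ⟪Df j (aggregate (g · j) (μ k)),
      (N : ℝ)⁻¹ • ∑ i, g i j (xbar k i) - aggregate (g · j) (μ k)⟫ ≤ sInf B := by
    subst hB
    refine le_csInf ⟨_, μ 0, hμ0, rfl⟩ ?_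
    rintro _ ⟨ν, hν, rfl⟩
    exact frankWolfe_gap_le hconv hdiff g (hmem k) (hxbar k) hν
      fun j => aggregate_mem_convexHull (g · j) hν
  refine le_two_mul_div_of_frankWolfe_recursion (by positivity) fun k => ?_
  have hnext (j : Fin M) : (N : ℝ)⁻¹ • ∑ i, expFS (μ (k + 1) i) (g i j) =
      aggregate (g · j) (μ k) + (2 / ((k : ℝ) + 2)) •
        ((N : ℝ)⁻¹ • ∑ i, g i j (xbar k i) - aggregate (g · j) (μ k)) := by
    simp only [hupdate]
    exact aggregate_frankWolfe_update _ _ _ _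
  simp only [hnext]
  refine (frankWolfe_step_le (fun j => convex_convexHull ℝ _) hdiff hgradLip (hmem k)
    (fun j => subset_convexHull ℝ _ ⟨xbar k, rfl⟩)
    (fun j => norm_sub_le_of_mem_convexHull_range (hd · j) (subset_convexHull ℝ _ ⟨xbar k, rfl⟩)
      (hmem k j)) (hω₀ k) (hω₁ k) (hgap k)).trans ?_
  exact add_le_add_right (mul_le_mul_of_nonneg_left (sum_mul_sq_mean_le Lt d) (sq_nonneg _)) _
end

section
/- (Gap estimate via nonconvexity measure.) Let K ⊆ E (a Hilbert space) and let F be differentiable on a neighborhood of conv(K) with L̃-Lipschitz gradient on conv(K). Then inf_{y∈K} F(y) ≤ inf_{y∈conv(K)} F(y) + (L̃/2)ρ(K)², where ρ(K)² = sup_{y ∈ conv(K)} inf { σ²_μ[Id] : μ finitely supported probability on K with E_μ[Id] = y }. -/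
/-- Variance of `F` under a finitely supported measure `μ`. -/
noncomputable def varFS {Ω E : Type*} [NormedAddCommGroup E] [NormedSpace ℝ E]
    (μ : Ω →₀ ℝ) (F : Ω → E) : ℝ :=
  μ.sum fun x w => w * ‖F x - expFS μ F‖ ^ 2

/-!
Along a segment inside `conv K`, the `L`-Lipschitz gradient gives the descent inequality
`F x ≤ F y + ⟪∇F y, x - y⟫ + (L/2)‖x - y‖²`. Averaging it over a probability `μ` on `K` with
barycenter `y` kills the linear term, so `E_μ F ≤ F y + (L/2) Var μ`, and some atom `x ∈ K` of `μ`
has `F x ≤ E_μ F`. Since `Var μ ≤ R + ε` for every `ε > 0`, this gives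
`inf_K F ≤ F y + (L/2) R` for every `y ∈ conv K`.
-/

open InnerProductSpace Set Filter Topology

section FinitelySupported

variable {Ω : Type*} {μ : Ω →₀ ℝ}

lemma IsFinProb.support_nonempty (hμ : IsFinProb μ) : μ.support.Nonempty := by
  rw [Finset.nonempty_iff_ne_empty]
  intro h
  simpa [IsFinProb, Finsupp.sum, h] using hμ.2

lemma expFS_const {E : Type*} [AddCommMonoid E] [Module ℝ E] (hμ : IsFinProb μ) (c : E) :
    expFS μ (fun _ => c) = c := by
  have : ∑ x ∈ μ.support, μ x = 1 := hμ.2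
  simp only [expFS, Finsupp.sum, ← Finset.sum_smul, this, one_smul]

lemma expFS_add {E : Type*} [AddCommMonoid E] [Module ℝ E] (F G : Ω → E) :
    expFS μ (fun x => F x + G x) = expFS μ F + expFS μ G := by
  simp only [expFS, Finsupp.sum, smul_add, Finset.sum_add_distrib]

lemma expFS_sub {E : Type*} [AddCommGroup E] [Module ℝ E] (F G : Ω → E) :
    expFS μ (fun x => F x - G x) = expFS μ F - expFS μ G := by
  simp only [expFS, Finsupp.sum, smul_sub, Finset.sum_sub_distrib]

lemma expFS_const_mul (c : ℝ) (F : Ω → ℝ) :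
    expFS μ (fun x => c * F x) = c * expFS μ F := by
  simp only [expFS, Finsupp.sum, smul_eq_mul, Finset.mul_sum, mul_left_comm]

lemma expFS_inner {E : Type*} [NormedAddCommGroup E] [InnerProductSpace ℝ E] (g : E)
    (G : Ω → E) : expFS μ (fun x => ⟪g, G x⟫_ℝ) = ⟪g, expFS μ G⟫_ℝ := by
  simp only [expFS, Finsupp.sum, inner_sum, real_inner_smul_right, smul_eq_mul]

lemma expFS_mono (hμ : ∀ x, 0 ≤ μ x) {F G : Ω → ℝ} (h : ∀ x ∈ μ.support, F x ≤ G x) :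
    expFS μ F ≤ expFS μ G :=
  Finset.sum_le_sum fun x hx => mul_le_mul_of_nonneg_left (h x hx) (hμ x)

lemma IsFinProb.exists_le_expFS (hμ : IsFinProb μ) (F : Ω → ℝ) :
    ∃ x ∈ μ.support, F x ≤ expFS μ F := by
  have hsum : ∑ x ∈ μ.support, μ x * F x ≤ ∑ x ∈ μ.support, μ x * expFS μ F := by
    simpa [expFS, Finsupp.sum] using (expFS_const hμ (expFS μ F)).ge
  obtain ⟨x, hx, hle⟩ := Finset.exists_le_of_sum_le hμ.support_nonempty hsum
  exact ⟨x, hx, le_of_mul_le_mul_left hle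
    ((hμ.1 x).lt_of_ne (Ne.symm (Finsupp.mem_support_iff.1 hx)))⟩

lemma varFS_eq_expFS {E : Type*} [NormedAddCommGroup E] [NormedSpace ℝ E] (F : Ω → E) :
    varFS μ F = expFS μ (fun x => ‖F x - expFS μ F‖ ^ 2) :=
  rfl

lemma varFS_nonneg {E : Type*} [NormedAddCommGroup E] [NormedSpace ℝ E] (hμ : ∀ x, 0 ≤ μ x)
    (F : Ω → E) : 0 ≤ varFS μ F :=
  Finset.sum_nonneg fun x _ => mul_nonneg (hμ x) (sq_nonneg _)

end FinitelySupported

section Smooth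

variable {E : Type*} [NormedAddCommGroup E] [InnerProductSpace ℝ E] [CompleteSpace E]
  {s : Set E} {F : E → ℝ} {DF : E → E} {L : NNReal}

theorem Convex.le_add_inner_add_of_lipschitzOnWith_gradient (hs : Convex ℝ s)
    (hdiff : ∀ y ∈ s, HasGradientAt F (DF y) y) (hlip : LipschitzOnWith L DF s)
    {x y : E} (hx : x ∈ s) (hy : y ∈ s) :
    F x ≤ F y + ⟪DF y, x - y⟫_ℝ + L / 2 * ‖x - y‖ ^ 2 := by
  set v := x - y
  have hmem : ∀ t ∈ Icc (0 : ℝ) 1, y + t • v ∈ s := fun t ht => hs.add_smul_sub_mem hy hx ht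
  have hderiv : ∀ t ∈ Icc (0 : ℝ) 1,
      HasDerivAt (fun t : ℝ => F (y + t • v)) ⟪DF (y + t • v), v⟫_ℝ t := by
    intro t ht
    have hpath : HasDerivAt (fun t : ℝ => y + t • v) v t := by
      simpa using ((hasDerivAt_id t).smul_const v).const_add y
    have := (hdiff _ (hmem t ht)).hasFDerivAt.comp_hasDerivAt t hpath
    simp only [toDual_apply_apply] at this
    exact this
  have hbound : ∀ t ∈ Icc (0 : ℝ) 1,
      ⟪DF (y + t • v), v⟫_ℝ ≤ ⟪DF y, v⟫_ℝ + L * ‖v‖ ^ 2 * t := by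
    intro t ht
    have hlipt : ‖DF (y + t • v) - DF y‖ ≤ L * (t * ‖v‖) := by
      simpa [norm_smul, abs_of_nonneg ht.1] using hlip.norm_sub_le (hmem t ht) hy
    calc ⟪DF (y + t • v), v⟫_ℝ
        = ⟪DF y, v⟫_ℝ + ⟪DF (y + t • v) - DF y, v⟫_ℝ := by rw [inner_sub_left]; ring
      _ ≤ ⟪DF y, v⟫_ℝ + ‖DF (y + t • v) - DF y‖ * ‖v‖ := by gcongr; exact real_inner_le_norm _ _
      _ ≤ ⟪DF y, v⟫_ℝ + L * (t * ‖v‖) * ‖v‖ := by gcongr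
      _ = ⟪DF y, v⟫_ℝ + L * ‖v‖ ^ 2 * t := by ring
  have hB : ∀ t : ℝ, HasDerivAt (fun t => F y + t * ⟪DF y, v⟫_ℝ + L / 2 * ‖v‖ ^ 2 * t ^ 2)
      (⟪DF y, v⟫_ℝ + L * ‖v‖ ^ 2 * t) t := by
    intro t
    refine ((((hasDerivAt_id t).mul_const ⟪DF y, v⟫_ℝ).const_add (F y)).add
      ((hasDerivAt_pow 2 t).const_mul (L / 2 * ‖v‖ ^ 2))).congr_deriv ?_
    simp only [Nat.cast_ofNat]
    ring
  have := image_le_of_deriv_right_le_deriv_boundary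
    (fun t ht => (hderiv t ht).continuousAt.continuousWithinAt)
    (fun t ht => (hderiv t (Ico_subset_Icc_self ht)).hasDerivWithinAt)
    (B := fun t => F y + t * ⟪DF y, v⟫_ℝ + L / 2 * ‖v‖ ^ 2 * t ^ 2) (by simp)
    (fun t _ => (hB t).continuousAt.continuousWithinAt)
    (fun t _ => (hB t).hasDerivWithinAt)
    (fun t ht => hbound t (Ico_subset_Icc_self ht)) (right_mem_Icc.2 zero_le_one)
  simpa [v] using this

theorem IsFinProb.expFS_le_add_varFS (hs : Convex ℝ s)
    (hdiff : ∀ y ∈ s, HasGradientAt F (DF y) y) (hlip : LipschitzOnWith L DF s)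
    {μ : E →₀ ℝ} (hμ : IsFinProb μ) (hsupp : ↑μ.support ⊆ s) (hy : expFS μ id ∈ s) :
    expFS μ F ≤ F (expFS μ id) + L / 2 * varFS μ id := by
  set y := expFS μ id
  calc expFS μ F ≤ expFS μ (fun x => F y + ⟪DF y, x - y⟫_ℝ + L / 2 * ‖x - y‖ ^ 2) :=
        expFS_mono hμ.1 fun x hx =>
          hs.le_add_inner_add_of_lipschitzOnWith_gradient hdiff hlip (hsupp hx) hy
    _ = F y + L / 2 * varFS μ id := by
        simp only [expFS_add, expFS_const hμ, expFS_inner, expFS_sub, expFS_const_mul,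
          varFS_eq_expFS]
        rw [show expFS μ (fun x : E => x) = y from rfl, sub_self, inner_zero_right, add_zero]
        rfl

theorem IsFinProb.exists_le_add_varFS (hs : Convex ℝ s)
    (hdiff : ∀ y ∈ s, HasGradientAt F (DF y) y) (hlip : LipschitzOnWith L DF s)
    {μ : E →₀ ℝ} (hμ : IsFinProb μ) (hsupp : ↑μ.support ⊆ s) (hy : expFS μ id ∈ s) :
    ∃ x ∈ μ.support, F x ≤ F (expFS μ id) + L / 2 * varFS μ id :=
  let ⟨x, hx, hle⟩ := hμ.exists_le_expFS F
  ⟨x, hx, hle.trans (hμ.expFS_le_add_varFS hs hdiff hlip hsupp hy)⟩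

theorem csInf_image_le_add_of_forall_varFS_le (hs : Convex ℝ s)
    (hdiff : ∀ y ∈ s, HasGradientAt F (DF y) y) (hlip : LipschitzOnWith L DF s)
    {K : Set E} (hKs : K ⊆ s) (hbdd : BddBelow (F '' K)) {R : ℝ} {y : E} (hy : y ∈ s)
    (hR : ∀ ε > 0, ∃ μ : E →₀ ℝ,
      IsFinProb μ ∧ ↑μ.support ⊆ K ∧ expFS μ id = y ∧ varFS μ id ≤ R + ε) :
    sInf (F '' K) ≤ F y + L / 2 * R := by
  have hε : ∀ ε > 0, sInf (F '' K) ≤ F y + L / 2 * (R + ε) := by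
    intro ε hε
    obtain ⟨μ, hμ, hsupp, rfl, hvar⟩ := hR ε hε
    obtain ⟨x, hx, hFx⟩ := hμ.exists_le_add_varFS hs hdiff hlip (hsupp.trans hKs) hy
    calc sInf (F '' K) ≤ F x := csInf_le hbdd (mem_image_of_mem F (hsupp hx))
      _ ≤ _ := hFx
      _ ≤ _ := by gcongr
  have hlim : Tendsto (fun ε => F y + L / 2 * (R + ε)) (𝓝[>] 0) (𝓝 (F y + L / 2 * R)) :=
    tendsto_nhdsWithin_of_tendsto_nhds (Continuous.tendsto' (by fun_prop) 0 _ (by simp))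
  exact ge_of_tendsto hlim (eventually_nhdsWithin_of_forall hε)

end Smooth

/-- gap estimate via the nonconvexity measure. If `R ≥ ρ(K)²`,
in the sense that every point of `conv(K)` is the barycenter of finitely
supported probabilities on `K` of variance arbitrarily close to at most `R`,
and `F` has an `L̃`-Lipschitz gradient on `conv(K)`, then
`inf_K F ≤ inf_{conv(K)} F + (L̃/2) R`. -/
theorem gap_estimate_nonconvexity_measure
    {E : Type*} [NormedAddCommGroup E] [InnerProductSpace ℝ E] [CompleteSpace E]
    (K : Set E) (hK : K.Nonempty)
    (F : E → ℝ) (DF : E → E) (Lt : NNReal)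
    (hdiff : ∀ y ∈ convexHull ℝ K, HasGradientAt F (DF y) y)
    (hgradLip : LipschitzOnWith Lt DF (convexHull ℝ K))
    (R : ℝ)
    (hR : ∀ y ∈ convexHull ℝ K, ∀ ε > 0, ∃ μ : E →₀ ℝ,
      IsFinProb μ ∧ ↑μ.support ⊆ K ∧ expFS μ id = y ∧ varFS μ id ≤ R + ε) :
    sInf (F '' K) ≤ sInf (F '' convexHull ℝ K) + (Lt : ℝ) / 2 * R := by
  have hKsub : K ⊆ convexHull ℝ K := subset_convexHull ℝ K
  by_cases hbdd : BddBelow (F '' K)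
  · have key : ∀ y ∈ convexHull ℝ K, sInf (F '' K) - Lt / 2 * R ≤ F y := fun y hy =>
      sub_le_iff_le_add.2 <| csInf_image_le_add_of_forall_varFS_le (convex_convexHull ℝ K)
        hdiff hgradLip hKsub hbdd hy (hR y hy)
    have := le_csInf ((hK.mono hKsub).image F) (forall_mem_image.2 key)
    linarith
  · -- Both infima are the junk value `0`, so what remains is `0 ≤ R`.
    obtain ⟨x₀, hx₀⟩ := hK
    have hR0 : 0 ≤ R := le_of_forall_pos_le_add fun ε hε =>
      let ⟨μ, hμ, _, _, hvar⟩ := hR x₀ (hKsub hx₀) ε hε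
      (varFS_nonneg hμ.1 id).trans hvar
    rw [Real.sInf_of_not_bddBelow hbdd,
      Real.sInf_of_not_bddBelow (mt (BddBelow.mono (image_mono hKsub)) hbdd)]
    positivity
end
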